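/- The unique maximizer (ξ_j^{(N)*})_{j=1}^N of T_N satisfies the recursion (1-p)/(1+γξ_{j+1}^{(N)*}) = 1/(1+γξ_j^{(N)*}) - p/(1 + (γ/w)(B - ∑_{i=1}^j ξ_i^{(N)*})) for j = 1,…,N-1, together with the terminal condition ξ_N^{(N)*} = (B - ∑_{i=1}^N ξ_i^{(N)*})/w. -/

import Mathlib

open Real

/-- The finite-horizon throughput functional `T_N` (log base 2), evaluated at a
sequence indexed from 1 (only coordinates `1,…,N` matter). -/
noncomputable def TN (B γ p : ℝ) (w N : ℕ) (ξ : ℕ → ℝ) : ℝ :=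
  (∑ k ∈ Finset.Icc 1 w, p ^ 2 * (1 - p) ^ (k - 1) * ((k : ℝ) / 2) *
      Real.logb 2 (1 + γ * B / k))
  + (∑ j ∈ Finset.Icc 1 N, p * (1 - p) ^ (j + w - 1) * (1 / 2) *
      Real.logb 2 (1 + γ * ξ j))
  + (∑ k ∈ Finset.Icc 1 N, p ^ 2 * (1 - p) ^ (k + w - 1) * ((w : ℝ) / 2) *
      Real.logb 2 (1 + (γ / w) * (B - ∑ j ∈ Finset.Icc 1 k, ξ j)))
  + p * (1 - p) ^ (w + N) * ((w : ℝ) / 2) *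
      Real.logb 2 (1 + (γ / w) * (B - ∑ j ∈ Finset.Icc 1 N, ξ j))

/-- The admissible simplex `{ξ : ξ_j ≥ 0, ∑_{j=1}^N ξ_j ≤ B}`, as sequences supported
on coordinates `1,…,N`. -/
def adm (B : ℝ) (N : ℕ) : Set (ℕ → ℝ) :=
  {ξ | (∀ j, 1 ≤ j → j ≤ N → 0 ≤ ξ j) ∧ (∀ j, j = 0 ∨ N < j → ξ j = 0)
      ∧ ∑ j ∈ Finset.Icc 1 N, ξ j ≤ B}

/-!
Along the coordinate line `ξ + t e_j` the derivative of `T_N` at `t = 0` is `γ / (2 log 2)` times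
the marginal gain `a_j / (1 + γ ξ_j) - ∑_{k ≥ j} p a_k / D_k - (1 - p) a_N / D_N`, where
`a_k = p (1 - p)^(k + w - 1)` and `D_k = 1 + (γ / w) (B - ∑_{i ≤ k} ξ_i)`. The weights telescope,
`∑_{k ≥ j} p a_k + (1 - p) a_N = a_j`, so the gain is negative at a coordinate `ξ_j > 0` once the
budget is exhausted at `j` (all `D_k = 1` for `k ≥ j`), and positive at `ξ_j = 0` while it is not
(all `D_k ≥ 1`, `D_N > 1`). Comparing with the one-sided derivatives at a maximizer, the budget is
not exhausted and every coordinate is positive, so all marginal gains vanish. The difference of the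
conditions at `j` and `j + 1` is the recursion; the condition at `N` reads `1 + γ ξ_N = D_N`.
-/

open Filter Topology Finset

theorem HasDerivAt.logb {f : ℝ → ℝ} {f' x : ℝ} (b : ℝ) (hf : HasDerivAt f f' x) (hx : f x ≠ 0) :
    HasDerivAt (fun t => Real.logb b (f t)) (f' / (f x * Real.log b)) x := by
  simpa [Real.logb, div_div] using (hf.log hx).div_const (Real.log b)

theorem IsMaxOn.hasLineDerivAt_nonpos {E : Type*} [AddCommGroup E] [Module ℝ E] {f : E → ℝ}
    {s : Set E} {a v : E} {f' : ℝ} (h : IsMaxOn f s a) (hd : HasLineDerivAt ℝ f f' a v)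
    (hs : ∀ᶠ t in 𝓝[>] (0 : ℝ), a + t • v ∈ s) : f' ≤ 0 := by
  refine le_of_tendsto hd.tendsto_slope_zero_right ?_
  filter_upwards [hs, self_mem_nhdsWithin] with t hts (ht : 0 < t)
  exact smul_nonpos_of_nonneg_of_nonpos (inv_nonneg.2 ht.le) (sub_nonpos.2 (h hts))

noncomputable def TNMarginal (B γ p : ℝ) (w N : ℕ) (ξ : ℕ → ℝ) (j : ℕ) : ℝ :=
  p * (1 - p) ^ (j + w - 1) / (1 + γ * ξ j)
    - ∑ k ∈ Icc j N, p ^ 2 * (1 - p) ^ (k + w - 1) / (1 + γ / w * (B - ∑ i ∈ Icc 1 k, ξ i))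
    - p * (1 - p) ^ (w + N) / (1 + γ / w * (B - ∑ i ∈ Icc 1 N, ξ i))

theorem hasDerivAt_const_mul_logb_one_add_mul {g : ℝ → ℝ} {g' x : ℝ} (c β : ℝ)
    (hg : HasDerivAt g g' x) (hx : 1 + β * g x ≠ 0) :
    HasDerivAt (fun t => c * Real.logb 2 (1 + β * g t))
      (c * β * g' / ((1 + β * g x) * Real.log 2)) x := by
  simpa [mul_div_assoc, mul_assoc] using ((hg.const_mul β).const_add 1).logb 2 hx |>.const_mul c

theorem hasDerivAt_add_smul_apply {α : Type*} (ξ v : α → ℝ) (i : α) (x : ℝ) :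
    HasDerivAt (fun t : ℝ => (ξ + t • v) i) (v i) x := by
  simpa using ((hasDerivAt_id x).mul_const (v i)).const_add (ξ i)

theorem hasDerivAt_sum_add_smul_single {α : Type*} [DecidableEq α] (s : Finset α) (ξ : α → ℝ)
    (j : α) (x : ℝ) :
    HasDerivAt (fun t : ℝ => ∑ i ∈ s, (ξ + t • (Pi.single j 1 : α → ℝ)) i)
      (if j ∈ s then 1 else 0) x := by
  simpa using HasDerivAt.fun_sum fun i _ => hasDerivAt_add_smul_apply ξ (Pi.single j 1) i x

theorem Icc_filter_mem_Icc_one (j N : ℕ) (hj : 1 ≤ j) : {k ∈ Icc 1 N | j ∈ Icc 1 k} = Icc j N := by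
  ext k; simp only [mem_filter, mem_Icc]; omega

theorem hasLineDerivAt_TN_single {B γ p : ℝ} {w N j : ℕ} {ξ : ℕ → ℝ} (hw : w ≠ 0)
    (hE : ∀ i ∈ Icc 1 N, 1 + γ * ξ i ≠ 0)
    (hD : ∀ k ∈ Icc 1 N, 1 + γ / w * (B - ∑ i ∈ Icc 1 k, ξ i) ≠ 0) (hj : j ∈ Icc 1 N) :
    HasLineDerivAt ℝ (TN B γ p w N) (γ / (2 * Real.log 2) * TNMarginal B γ p w N ξ j) ξ
      (Pi.single j 1) := by
  have hw' : (w : ℝ) ≠ 0 := by exact_mod_cast hw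
  have hlog : Real.log 2 ≠ 0 := (Real.log_pos one_lt_two).ne'
  have hP := HasDerivAt.fun_sum (u := Icc 1 N) fun i hi =>
    hasDerivAt_const_mul_logb_one_add_mul (p * (1 - p) ^ (i + w - 1) * (1 / 2)) γ
      (hasDerivAt_add_smul_apply ξ (Pi.single j 1) i 0) (by simpa using hE i hi)
  have hQ := HasDerivAt.fun_sum (u := Icc 1 N) fun k hk =>
    hasDerivAt_const_mul_logb_one_add_mul (p ^ 2 * (1 - p) ^ (k + w - 1) * ((w : ℝ) / 2)) (γ / w)
      ((hasDerivAt_sum_add_smul_single (Icc 1 k) ξ j 0).const_sub B) (by simpa using hD k hk)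
  have hR :=
    hasDerivAt_const_mul_logb_one_add_mul (p * (1 - p) ^ (w + N) * ((w : ℝ) / 2)) (γ / w)
      ((hasDerivAt_sum_add_smul_single (Icc 1 N) ξ j 0).const_sub B)
      (by simpa using hD N (right_mem_Icc.2 ((mem_Icc.1 hj).1.trans (mem_Icc.1 hj).2)))
  have hTN := (((hasDerivAt_const (0 : ℝ) (∑ k ∈ Icc 1 w,
      p ^ 2 * (1 - p) ^ (k - 1) * ((k : ℝ) / 2) * Real.logb 2 (1 + γ * B / k))).add hP).add
    hQ).add hR
  refine hTN.congr_deriv ?_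
  simp only [Pi.add_apply, Pi.smul_apply, smul_eq_mul, zero_mul, add_zero, mul_neg, mul_ite,
    mul_one, mul_zero, neg_ite, neg_zero, ite_div, zero_div, ← sum_filter,
    Icc_filter_mem_Icc_one j N (mem_Icc.1 hj).1, hj, if_true]
  rw [sum_eq_single_of_mem j hj fun i _ hij => by simp [Pi.single_eq_of_ne hij]]
  have hgain (c E : ℝ) :
      c * (1 / 2) * γ * 1 / (E * Real.log 2) = γ / (2 * Real.log 2) * (c / E) := by
    field_simp
  have hloss (c D : ℝ) : -(c * (w / 2) * (γ / w)) / (D * Real.log 2) =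
      -(γ / (2 * Real.log 2) * (c / D)) := by
    field_simp
  simp only [Pi.single_eq_same, hgain, hloss, sum_neg_distrib, ← mul_sum, TNMarginal]
  ring

section Admissible

variable {B : ℝ} {N : ℕ} {ξ : ℕ → ℝ}

theorem sum_Icc_mono_of_mem_adm (hξ : ξ ∈ adm B N) {k l : ℕ} (hkl : k ≤ l) (hl : l ≤ N) :
    ∑ i ∈ Icc 1 k, ξ i ≤ ∑ i ∈ Icc 1 l, ξ i :=
  sum_le_sum_of_subset_of_nonneg (Icc_subset_Icc_right hkl) fun i hi _ =>
    hξ.1 i (mem_Icc.1 hi).1 ((mem_Icc.1 hi).2.trans hl)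

theorem sum_Icc_le_of_mem_adm (hξ : ξ ∈ adm B N) {k : ℕ} (hk : k ≤ N) :
    ∑ i ∈ Icc 1 k, ξ i ≤ B :=
  (sum_Icc_mono_of_mem_adm hξ hk le_rfl).trans hξ.2.2

theorem one_le_one_add_mul_of_mem_adm (hξ : ξ ∈ adm B N) {c : ℝ} (hc : 0 ≤ c) {i : ℕ}
    (hi : i ∈ Icc 1 N) : 1 ≤ 1 + c * ξ i :=
  le_add_of_nonneg_right (mul_nonneg hc (hξ.1 i (mem_Icc.1 hi).1 (mem_Icc.1 hi).2))

theorem one_le_one_add_mul_sub_sum_of_mem_adm (hξ : ξ ∈ adm B N) {c : ℝ} (hc : 0 ≤ c) {k : ℕ}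
    (hk : k ≤ N) : 1 ≤ 1 + c * (B - ∑ i ∈ Icc 1 k, ξ i) :=
  le_add_of_nonneg_right (mul_nonneg hc (sub_nonneg.2 (sum_Icc_le_of_mem_adm hξ hk)))

theorem add_smul_single_mem_adm (hξ : ξ ∈ adm B N) {j : ℕ} (hj : j ∈ Icc 1 N) {t : ℝ}
    (h0 : 0 ≤ ξ j + t) (hB : t ≤ B - ∑ i ∈ Icc 1 N, ξ i) : ξ + t • Pi.single j 1 ∈ adm B N := by
  obtain ⟨hnn, hzero, hsum⟩ := hξ
  obtain ⟨hj1, hjN⟩ := mem_Icc.1 hj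
  refine ⟨fun i hi1 hiN => ?_, fun i hi => ?_, ?_⟩
  · rcases eq_or_ne i j with rfl | hij
    · simpa using h0
    · simpa [Pi.single_eq_of_ne hij] using hnn i hi1 hiN
  · have hij : i ≠ j := by omega
    simp [Pi.single_eq_of_ne hij, hzero i hi]
  · simp only [Pi.add_apply, Pi.smul_apply, smul_eq_mul, sum_add_distrib, ← mul_sum,
      sum_pi_single', hj, if_true]
    linarith

theorem exists_pos_and_sum_eq_of_sum_eq (hB : 0 < B) (hξ : ξ ∈ adm B N)
    (hS : ∑ i ∈ Icc 1 N, ξ i = B) : ∃ j ∈ Icc 1 N, 0 < ξ j ∧ ∑ i ∈ Icc 1 j, ξ i = B := by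
  classical
  have hex : ∃ k, ∑ i ∈ Icc 1 k, ξ i = B := ⟨N, hS⟩
  have hjS : ∑ i ∈ Icc 1 (Nat.find hex), ξ i = B := Nat.find_spec hex
  have hjN : Nat.find hex ≤ N := Nat.find_min' hex hS
  obtain ⟨m, hm⟩ : ∃ m, Nat.find hex = m + 1 :=
    Nat.exists_eq_succ_of_ne_zero fun h0 => by simp [h0] at hjS; linarith
  have hmS : ∑ i ∈ Icc 1 m, ξ i < B :=
    (sum_Icc_le_of_mem_adm hξ (by omega)).lt_of_ne (Nat.find_min hex (by omega))
  refine ⟨m + 1, mem_Icc.2 ⟨by omega, by omega⟩, ?_, hm ▸ hjS⟩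
  rw [hm, sum_Icc_succ_top (by omega)] at hjS
  linarith

end Admissible

section Marginal

variable {B γ p : ℝ} {w N j : ℕ} {ξ : ℕ → ℝ}

theorem sum_Icc_geom_tail (p : ℝ) (hw : 1 ≤ w) (hj : j ≤ N) :
    ∑ k ∈ Icc j N, p ^ 2 * (1 - p) ^ (k + w - 1) + p * (1 - p) ^ (w + N) =
      p * (1 - p) ^ (j + w - 1) := by
  obtain ⟨v, rfl⟩ := Nat.exists_eq_add_of_le' hw
  simp only [← add_assoc, Nat.add_sub_cancel]
  induction N, hj using Nat.le_induction with
  | base => rw [Icc_self, sum_singleton]; ring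
  | succ N hN ih =>
    rw [sum_Icc_succ_top (by omega), ← ih]
    ring

theorem TNMarginal_eq_geom_tail (hw : 1 ≤ w) (hj : j ≤ N) :
    TNMarginal B γ p w N ξ j =
      p * (1 - p) ^ (j + w - 1) * (1 / (1 + γ * ξ j) - 1)
        + ∑ k ∈ Icc j N, p ^ 2 * (1 - p) ^ (k + w - 1) *
            (1 - 1 / (1 + γ / w * (B - ∑ i ∈ Icc 1 k, ξ i)))
        + p * (1 - p) ^ (w + N) * (1 - 1 / (1 + γ / w * (B - ∑ i ∈ Icc 1 N, ξ i))) := by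
  rw [TNMarginal, ← sum_Icc_geom_tail p hw hj]
  simp only [mul_sub, mul_one, mul_one_div, sum_sub_distrib]
  ring

theorem TNMarginal_neg_of_sum_eq (hp : 0 < p) (hp1 : p < 1) (hγ : 0 < γ) (hw : 1 ≤ w)
    (hξ : ξ ∈ adm B N) (hjN : j ≤ N) (hξj : 0 < ξ j) (hSj : ∑ i ∈ Icc 1 j, ξ i = B) :
    TNMarginal B γ p w N ξ j < 0 := by
  have hfull : ∀ k ∈ Icc j N, 1 + γ / w * (B - ∑ i ∈ Icc 1 k, ξ i) = 1 := fun k hk => by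
    obtain ⟨hjk, hkN⟩ := mem_Icc.1 hk
    rw [(sum_Icc_le_of_mem_adm hξ hkN).antisymm (hSj ▸ sum_Icc_mono_of_mem_adm hξ hjk hkN)]
    ring
  have hgain : 1 / (1 + γ * ξ j) < 1 := (div_lt_one (by positivity)).2 (by nlinarith)
  rw [TNMarginal_eq_geom_tail hw hjN, sum_eq_zero fun k hk => by rw [hfull k hk]; ring,
    hfull N (right_mem_Icc.2 hjN)]
  have : 0 < p * (1 - p) ^ (j + w - 1) := mul_pos hp (pow_pos (sub_pos.2 hp1) _)
  nlinarith

theorem TNMarginal_pos_of_eq_zero (hp : 0 < p) (hp1 : p < 1) (hγ : 0 < γ) (hw : 1 ≤ w)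
    (hξ : ξ ∈ adm B N) (hjN : j ≤ N) (hξj : ξ j = 0) (hS : ∑ i ∈ Icc 1 N, ξ i < B) :
    0 < TNMarginal B γ p w N ξ j := by
  have hc : 0 ≤ γ / w := by positivity
  have hsum : 0 ≤ ∑ k ∈ Icc j N, p ^ 2 * (1 - p) ^ (k + w - 1) *
      (1 - 1 / (1 + γ / w * (B - ∑ i ∈ Icc 1 k, ξ i))) := by
    refine sum_nonneg fun k hk => mul_nonneg (by positivity) ?_
    have hD := one_le_one_add_mul_sub_sum_of_mem_adm hξ hc (mem_Icc.1 hk).2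
    exact sub_nonneg.2 ((div_le_one (by linarith)).2 hD)
  have hlast : 0 < 1 - 1 / (1 + γ / w * (B - ∑ i ∈ Icc 1 N, ξ i)) := by
    have : 0 < γ / w * (B - ∑ i ∈ Icc 1 N, ξ i) := mul_pos (by positivity) (sub_pos.2 hS)
    rw [sub_pos, div_lt_one (by linarith)]
    linarith
  rw [TNMarginal_eq_geom_tail hw hjN, hξj, mul_zero, add_zero, div_one, sub_self, mul_zero,
    zero_add]
  exact add_pos_of_nonneg_of_pos hsum (mul_pos (mul_pos hp (pow_pos (sub_pos.2 hp1) _)) hlast)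

end Marginal

section Maximizer

variable {B γ p : ℝ} {w N j : ℕ} {ξ : ℕ → ℝ}

theorem hasLineDerivAt_TN_single_of_mem_adm (hγ : 0 ≤ γ) (hw : w ≠ 0) (hξ : ξ ∈ adm B N)
    (hj : j ∈ Icc 1 N) :
    HasLineDerivAt ℝ (TN B γ p w N) (γ / (2 * Real.log 2) * TNMarginal B γ p w N ξ j) ξ
      (Pi.single j 1) :=
  hasLineDerivAt_TN_single hw
    (fun i hi => (one_pos.trans_le (one_le_one_add_mul_of_mem_adm hξ hγ hi)).ne')
    (fun k hk => (one_pos.trans_le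
      (one_le_one_add_mul_sub_sum_of_mem_adm hξ (by positivity) (mem_Icc.1 hk).2)).ne')
    hj

theorem TNMarginal_nonneg_of_isMaxOn (hγ : 0 < γ) (hw : w ≠ 0)
    (hmax : IsMaxOn (TN B γ p w N) (adm B N) ξ) (hξ : ξ ∈ adm B N) (hj : j ∈ Icc 1 N)
    (hξj : 0 < ξ j) : 0 ≤ TNMarginal B γ p w N ξ j := by
  have hd := (hasLineDerivAt_TN_single_of_mem_adm (p := p) hγ.le hw hξ hj).smul (-1)
  have hle := hmax.hasLineDerivAt_nonpos hd <| by
    filter_upwards [Ioc_mem_nhdsGT hξj] with t ht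
    rw [smul_smul, mul_neg_one]
    exact add_smul_single_mem_adm hξ hj (by linarith [ht.2])
      (by linarith [ht.1, sum_Icc_le_of_mem_adm hξ le_rfl])
  have : 0 < γ / (2 * Real.log 2) := by positivity
  rw [smul_eq_mul, neg_one_mul, neg_nonpos] at hle
  exact nonneg_of_mul_nonneg_right hle this

theorem TNMarginal_nonpos_of_isMaxOn (hγ : 0 < γ) (hw : w ≠ 0)
    (hmax : IsMaxOn (TN B γ p w N) (adm B N) ξ) (hξ : ξ ∈ adm B N) (hj : j ∈ Icc 1 N)
    (hS : ∑ i ∈ Icc 1 N, ξ i < B) : TNMarginal B γ p w N ξ j ≤ 0 := by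
  have hle := hmax.hasLineDerivAt_nonpos (hasLineDerivAt_TN_single_of_mem_adm hγ.le hw hξ hj) <| by
    filter_upwards [Ioc_mem_nhdsGT (sub_pos.2 hS)] with t ht
    exact add_smul_single_mem_adm hξ hj
      (by linarith [ht.1, hξ.1 j (mem_Icc.1 hj).1 (mem_Icc.1 hj).2]) ht.2
  have : 0 < γ / (2 * Real.log 2) := by positivity
  exact nonpos_of_mul_nonpos_right hle this

theorem sum_lt_of_isMaxOn (hB : 0 < B) (hγ : 0 < γ) (hp : 0 < p) (hp1 : p < 1) (hw : 1 ≤ w)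
    (hmax : IsMaxOn (TN B γ p w N) (adm B N) ξ) (hξ : ξ ∈ adm B N) :
    ∑ i ∈ Icc 1 N, ξ i < B := by
  refine hξ.2.2.lt_of_ne fun hS => ?_
  obtain ⟨j, hj, hξj, hSj⟩ := exists_pos_and_sum_eq_of_sum_eq hB hξ hS
  exact (TNMarginal_neg_of_sum_eq hp hp1 hγ hw hξ (mem_Icc.1 hj).2 hξj hSj).not_ge
    (TNMarginal_nonneg_of_isMaxOn hγ (by omega) hmax hξ hj hξj)

theorem pos_of_isMaxOn (hγ : 0 < γ) (hp : 0 < p) (hp1 : p < 1) (hw : 1 ≤ w)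
    (hmax : IsMaxOn (TN B γ p w N) (adm B N) ξ) (hξ : ξ ∈ adm B N)
    (hS : ∑ i ∈ Icc 1 N, ξ i < B) (hj : j ∈ Icc 1 N) : 0 < ξ j := by
  refine (hξ.1 j (mem_Icc.1 hj).1 (mem_Icc.1 hj).2).lt_of_ne fun hξj => ?_
  exact (TNMarginal_pos_of_eq_zero hp hp1 hγ hw hξ (mem_Icc.1 hj).2 hξj.symm hS).not_ge
    (TNMarginal_nonpos_of_isMaxOn hγ (by omega) hmax hξ hj hS)

theorem TNMarginal_eq_zero_of_isMaxOn (hB : 0 < B) (hγ : 0 < γ) (hp : 0 < p) (hp1 : p < 1)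
    (hw : 1 ≤ w) (hmax : IsMaxOn (TN B γ p w N) (adm B N) ξ) (hξ : ξ ∈ adm B N)
    (hj : j ∈ Icc 1 N) : TNMarginal B γ p w N ξ j = 0 := by
  have hS := sum_lt_of_isMaxOn hB hγ hp hp1 hw hmax hξ
  exact (TNMarginal_nonpos_of_isMaxOn hγ (by omega) hmax hξ hj hS).antisymm
    (TNMarginal_nonneg_of_isMaxOn hγ (by omega) hmax hξ hj
      (pos_of_isMaxOn hγ hp hp1 hw hmax hξ hS hj))

end Maximizer

section Recursion

variable {B γ p : ℝ} {w N j : ℕ} {ξ : ℕ → ℝ}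

theorem recursion_of_TNMarginal_eq_zero (hp : p ≠ 0) (hp1 : p ≠ 1) (hw : 1 ≤ w) (hjN : j < N)
    (hj : TNMarginal B γ p w N ξ j = 0) (hj' : TNMarginal B γ p w N ξ (j + 1) = 0) :
    (1 - p) / (1 + γ * ξ (j + 1))
      = 1 / (1 + γ * ξ j) - p / (1 + γ / w * (B - ∑ i ∈ Icc 1 j, ξ i)) := by
  have hIcc : Icc j N = insert j (Icc (j + 1) N) := by
    ext k; simp only [mem_Icc, mem_insert]; omega
  rw [TNMarginal, hIcc, sum_insert (by simp)] at hj
  rw [TNMarginal, show j + 1 + w - 1 = j + w - 1 + 1 by omega, pow_succ (1 - p)] at hj'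
  have ha : p * (1 - p) ^ (j + w - 1) ≠ 0 := mul_ne_zero hp (pow_ne_zero _ (sub_ne_zero.2 hp1.symm))
  apply mul_left_cancel₀ ha
  linear_combination hj' - hj

theorem terminal_of_TNMarginal_eq_zero (hp : p ≠ 0) (hp1 : p ≠ 1) (hγ : γ ≠ 0) (hw : 1 ≤ w)
    (hN : TNMarginal B γ p w N ξ N = 0) : ξ N = (B - ∑ i ∈ Icc 1 N, ξ i) / w := by
  rw [TNMarginal, Icc_self, sum_singleton, show w + N = N + w - 1 + 1 by omega,
    pow_succ (1 - p)] at hN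
  have ha : p * (1 - p) ^ (N + w - 1) ≠ 0 := mul_ne_zero hp (pow_ne_zero _ (sub_ne_zero.2 hp1.symm))
  have hED : 1 / (1 + γ * ξ N) = 1 / (1 + γ / w * (B - ∑ i ∈ Icc 1 N, ξ i)) := by
    apply mul_left_cancel₀ ha
    linear_combination hN
  have hw' : (w : ℝ) ≠ 0 := by positivity
  rw [one_div, one_div, inv_inj] at hED
  field_simp at hED
  rw [eq_div_iff hw']
  apply mul_left_cancel₀ hγ
  linear_combination hED

end Recursion

/-- The maximizer of `T_N` satisfies the KKT recursion
`(1-p)/(1+γξ_{j+1}) = 1/(1+γξ_j) - p/(1+(γ/w)(B-∑_{i=1}^j ξ_i))` for `j = 1,…,N-1`,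
together with the terminal condition `ξ_N = (B-∑_{i=1}^N ξ_i)/w`. -/
theorem TN_maximizer_recursion (B γ p : ℝ) (w N : ℕ) (hB : 0 < B) (hγ : 0 < γ)
    (hw : 1 ≤ w) (hp : 0 < p) (hp1 : p < 1) (hN : 1 ≤ N) (ξ : ℕ → ℝ)
    (hξ : ξ ∈ adm B N) (hmax : ∀ η ∈ adm B N, TN B γ p w N η ≤ TN B γ p w N ξ) :
    (∀ j, 1 ≤ j → j < N →
      (1 - p) / (1 + γ * ξ (j + 1))
        = 1 / (1 + γ * ξ j)
          - p / (1 + (γ / w) * (B - ∑ i ∈ Finset.Icc 1 j, ξ i)))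
    ∧ ξ N = (B - ∑ i ∈ Finset.Icc 1 N, ξ i) / w := by
  have hzero : ∀ j ∈ Icc 1 N, TNMarginal B γ p w N ξ j = 0 := fun j hj =>
    TNMarginal_eq_zero_of_isMaxOn hB hγ hp hp1 hw (isMaxOn_iff.2 hmax) hξ hj
  refine ⟨fun j hj1 hjN => recursion_of_TNMarginal_eq_zero hp.ne' hp1.ne hw hjN
    (hzero j (mem_Icc.2 ⟨hj1, hjN.le⟩)) (hzero (j + 1) (mem_Icc.2 ⟨by omega, hjN⟩)), ?_⟩
  exact terminal_of_TNMarginal_eq_zero hp.ne' hp1.ne hγ.ne' hw (hzero N (right_mem_Icc.2 hN))
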